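/- Let X = [0,1]^d, let Y ⊂ ℝ^d be compact, let π be a Borel probability measure on X×Y with first marginal μ, and let {X_J}_{J∈F} be a finite Borel partition of X with diam(X_J) ≤ δ for every J ∈ F. Define π̄ := Σ_{J ∈ F, μ(X_J) > 0} (μ ↾ X_J) ⊗ (P_Y(π ↾ (X_J×Y)) / μ(X_J)). Then π̄ is a probability measure on X×Y with the same two marginals as π, and W_{X×Y}(π̄, π) ≤ δ, where X×Y ⊂ ℝ^{2d} carries the Euclidean distance. In particular, averaging a coupling over the composite cells at scale n (cells of diameter 2√d/n) changes it by at most 2√d/n in Wasserstein-1 distance. -/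

import Mathlib

/-!
On a cell `J`, draw `x ∼ μ ↾ J` independently of `(x', y) ∼ π ↾ (J × Y)` and send `(x, y)` to
`(x', y)`. Divided by `μ J`, this couples the `J`-term of `π̄` with `π ↾ (J × Y)` and moves mass
only along `J × {y}`, hence by at most `diam J ≤ δ`. Summing over the cells gives a coupling of
`π̄` with `π` of cost at most `δ · Σ_J μ J = δ`. The marginal identities all reduce to
`(μ J)⁻¹ • μ J • ν = ν` for a measure `ν` of mass `μ J`, which also holds when `μ J = 0`.
-/

open MeasureTheory Set Filter
open scoped ENNReal Classical

noncomputable section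

abbrev E (d : ℕ) : Type := EuclideanSpace ℝ (Fin d)

/-- Optimal-transport cost with cost function `c`. -/
noncomputable def OTC {A B : Type*} [MeasurableSpace A] [MeasurableSpace B]
    (c : A → B → ℝ≥0∞) (α : Measure A) (β : Measure B) : ℝ≥0∞ :=
  ⨅ (γ : Measure (A × B)) (_ : γ.map Prod.fst = α) (_ : γ.map Prod.snd = β),
    ∫⁻ p, c p.1 p.2 ∂γ

/-- Euclidean distance on `ℝ^d × ℝ^d = ℝ^{2d}`. -/
noncomputable def edistE2 {d₁ d₂ : ℕ} (p q : E d₁ × E d₂) : ℝ≥0∞ :=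
  ENNReal.ofReal (Real.sqrt (dist p.1 q.1 ^ 2 + dist p.2 q.2 ^ 2))

/-- Product of two measures. -/
noncomputable def prodM {A B : Type*} [MeasurableSpace A] [MeasurableSpace B]
    (α : Measure A) (β : Measure B) : Measure (A × B) :=
  α.bind fun a => β.map (Prod.mk a)

/-- The cube `X = [0,1]^d`. -/
def Xcube (d : ℕ) : Set (E d) := {x | ∀ i, x i ∈ Icc (0:ℝ) 1}

/-- Cell average of a coupling over a finite partition:
`π̄ = Σ_J (μ ↾ X_J) ⊗ (P_Y(π ↾ X_J×Y)/μ(X_J))` (terms with `μ(X_J) = 0` vanish). -/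
noncomputable def avgF (d : ℕ) (μ : Measure (E d)) (F : Finset (Set (E d)))
    (π : Measure (E d × E d)) : Measure (E d × E d) :=
  ∑ J ∈ F, prodM (μ.restrict J) ((μ J)⁻¹ • (π.restrict (J ×ˢ univ)).map Prod.snd)

lemma prodM_eq_prod {A B : Type*} [MeasurableSpace A] [MeasurableSpace B]
    (α : Measure A) (β : Measure B) : prodM α β = α.prod β :=
  (Measure.prod_def α β).symm

lemma isBounded_Xcube (d : ℕ) : Bornology.IsBounded (Xcube d) := by
  refine ((isCompact_univ_pi fun _ => isCompact_Icc (a := (0 : ℝ)) (b := 1)).image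
    (PiLp.continuous_toLp 2 fun _ : Fin d => ℝ)).isBounded.subset fun x hx => ?_
  exact ⟨WithLp.ofLp x, fun i _ => hx i, WithLp.toLp_ofLp (p := 2) x⟩

lemma edistE2_mk_mk_snd {d₁ d₂ : ℕ} (a a' : E d₁) (b : E d₂) :
    edistE2 (a, b) (a', b) = edist a a' := by
  simp [edistE2, dist_self, Real.sqrt_sq dist_nonneg, edist_dist]

lemma OTC_le_lintegral {A B : Type*} [MeasurableSpace A] [MeasurableSpace B]
    (c : A → B → ℝ≥0∞) {α : Measure A} {β : Measure B} (γ : Measure (A × B))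
    (h₁ : γ.map Prod.fst = α) (h₂ : γ.map Prod.snd = β) :
    OTC c α β ≤ ∫⁻ p, c p.1 p.2 ∂γ :=
  iInf_le_of_le γ <| iInf_le_of_le h₁ <| iInf_le_of_le h₂ le_rfl

lemma inv_mul_smul_eq_self {A : Type*} [MeasurableSpace A] {m : Measure A} {t : ℝ≥0∞}
    (hm : m univ = t) (ht : t ≠ ⊤) : (t⁻¹ * t) • m = m := by
  rcases eq_or_ne t 0 with rfl | h0
  · rw [Measure.measure_univ_eq_zero.1 hm, smul_zero]
  · rw [ENNReal.inv_mul_cancel h0 ht, one_smul]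

lemma finset_sum_restrict_eq_self {A ι : Type*} [MeasurableSpace A] (μ : Measure A)
    {F : Finset ι} {s : ι → Set A} (hm : ∀ i ∈ F, MeasurableSet (s i))
    (hd : (F : Set ι).PairwiseDisjoint s) (hcover : μ (⋃ i ∈ F, s i)ᶜ = 0) :
    ∑ i ∈ F, μ.restrict (s i) = μ := by
  have hU : μ.restrict (⋃ i ∈ F, s i) = ∑ i ∈ F, μ.restrict (s i) := by
    rw [← Finset.sum_coe_sort F, ← Measure.sum_fintype,
      ← Measure.restrict_iUnion (s := fun i : F => s i)
        (fun i j hij => hd i.2 j.2 (Subtype.coe_ne_coe.2 hij)) (fun i => hm i i.2),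
      iUnion_subtype]
  rw [← hU]
  exact Measure.restrict_eq_self_of_ae_mem (mem_ae_iff.2 hcover)

section CellAverage

variable {A B : Type*} [MeasurableSpace A] [MeasurableSpace B]
  {μ : Measure A} {π : Measure (A × B)}

lemma measure_prod_univ_of_map_fst (hμ : π.map Prod.fst = μ) {s : Set A} (hs : MeasurableSet s) :
    π (s ×ˢ univ) = μ s := by
  rw [← hμ, Measure.map_apply measurable_fst hs, prod_univ]

def cellProd (μ : Measure A) (π : Measure (A × B)) (s : Set A) : Measure (A × B) :=
  (μ.restrict s).prod ((μ s)⁻¹ • (π.restrict (s ×ˢ univ)).map Prod.snd)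

lemma cellProd_map_fst [IsFiniteMeasure π] (hμ : π.map Prod.fst = μ) {s : Set A}
    (hs : MeasurableSet s) : (cellProd μ π s).map Prod.fst = μ.restrict s := by
  have : IsFiniteMeasure μ := hμ ▸ inferInstance
  rw [cellProd, Measure.map_fst_prod, Measure.smul_apply, Measure.map_apply measurable_snd .univ,
    preimage_univ, Measure.restrict_apply_univ, measure_prod_univ_of_map_fst hμ hs, smul_eq_mul]
  exact inv_mul_smul_eq_self (Measure.restrict_apply_univ s) (measure_ne_top μ s)

lemma cellProd_map_snd [IsFiniteMeasure π] (hμ : π.map Prod.fst = μ) {s : Set A}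
    (hs : MeasurableSet s) :
    (cellProd μ π s).map Prod.snd = (π.restrict (s ×ˢ univ)).map Prod.snd := by
  have : IsFiniteMeasure μ := hμ ▸ inferInstance
  rw [cellProd, Measure.map_snd_prod, Measure.restrict_apply_univ, smul_smul, mul_comm]
  refine inv_mul_smul_eq_self ?_ (measure_ne_top μ s)
  rw [Measure.map_apply measurable_snd .univ, preimage_univ, Measure.restrict_apply_univ,
    measure_prod_univ_of_map_fst hμ hs]

def cellCoupling (μ : Measure A) (π : Measure (A × B)) (s : Set A) :
    Measure ((A × B) × (A × B)) :=
  (μ s)⁻¹ • ((μ.restrict s).prod (π.restrict (s ×ˢ univ))).map fun p => ((p.1, p.2.2), p.2)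

lemma measurable_cellCoupling_map :
    Measurable fun p : A × (A × B) => ((p.1, p.2.2), p.2) :=
  (measurable_fst.prodMk measurable_snd.snd).prodMk measurable_snd

lemma cellCoupling_map_fst [SFinite μ] [SFinite π] (s : Set A) :
    (cellCoupling μ π s).map Prod.fst = cellProd μ π s := by
  rw [cellCoupling, Measure.map_smul, Measure.map_map measurable_fst measurable_cellCoupling_map,
    cellProd, Measure.prod_smul_right, ← Measure.map_id (μ := μ.restrict s),
    Measure.map_prod_map _ _ measurable_id measurable_snd, Measure.map_id]
  rfl

lemma cellCoupling_map_snd [IsFiniteMeasure π] (hμ : π.map Prod.fst = μ) {s : Set A}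
    (hs : MeasurableSet s) : (cellCoupling μ π s).map Prod.snd = π.restrict (s ×ˢ univ) := by
  have : IsFiniteMeasure μ := hμ ▸ inferInstance
  rw [cellCoupling, Measure.map_smul, Measure.map_map measurable_snd measurable_cellCoupling_map]
  change (μ s)⁻¹ • ((μ.restrict s).prod (π.restrict (s ×ˢ univ))).map Prod.snd = _
  rw [Measure.map_snd_prod, Measure.restrict_apply_univ, smul_smul]
  refine inv_mul_smul_eq_self ?_ (measure_ne_top μ s)
  rw [Measure.restrict_apply_univ, measure_prod_univ_of_map_fst hμ hs]

lemma lintegral_cellCoupling_le [IsFiniteMeasure π] (hμ : π.map Prod.fst = μ) {s : Set A}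
    (hs : MeasurableSet s) (c : A × B → A × B → ℝ≥0∞) {C : ℝ≥0∞}
    (hc : ∀ a ∈ s, ∀ a' ∈ s, ∀ b, c (a, b) (a', b) ≤ C) :
    ∫⁻ p, c p.1 p.2 ∂cellCoupling μ π s ≤ C * μ s := by
  have : IsFiniteMeasure μ := hμ ▸ inferInstance
  set P := (μ.restrict s).prod (π.restrict (s ×ˢ univ))
  have hmem : ∀ᵐ p ∂P, p ∈ s ×ˢ (s ×ˢ univ) := by
    rw [show P = (μ.prod π).restrict (s ×ˢ (s ×ˢ univ)) from Measure.prod_restrict _ _]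
    exact ae_restrict_mem (hs.prod (hs.prod .univ))
  have hbound : ∫⁻ p, c (p.1, p.2.2) p.2 ∂P ≤ C * (μ s * μ s) :=
    calc ∫⁻ p, c (p.1, p.2.2) p.2 ∂P ≤ ∫⁻ _, C ∂P :=
          lintegral_mono_ae <| hmem.mono fun p hp => hc _ hp.1 _ hp.2.1 _
      _ = C * (μ s * μ s) := by
          rw [lintegral_const, ← univ_prod_univ, Measure.prod_prod, Measure.restrict_apply_univ,
            Measure.restrict_apply_univ, measure_prod_univ_of_map_fst hμ hs]
  calc ∫⁻ p, c p.1 p.2 ∂cellCoupling μ π s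
      ≤ (μ s)⁻¹ * ∫⁻ p, c (p.1, p.2.2) p.2 ∂P := by
        rw [cellCoupling, lintegral_smul_measure, smul_eq_mul]
        exact mul_le_mul_right (lintegral_map_le _ _) _
    _ ≤ (μ s)⁻¹ * (C * (μ s * μ s)) := mul_le_mul_right hbound _
    _ = C * μ s := by
        rcases eq_or_ne (μ s) 0 with h0 | h0
        · simp [h0]
        · rw [mul_left_comm, ← mul_assoc (μ s)⁻¹, ENNReal.inv_mul_cancel h0 (measure_ne_top μ s),
            one_mul]

def cellAverage (μ : Measure A) (F : Finset (Set A)) (π : Measure (A × B)) : Measure (A × B) :=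
  ∑ J ∈ F, cellProd μ π J

lemma finset_sum_restrict_eq_self_of_sUnion (μ : Measure A) {F : Finset (Set A)}
    (hFm : ∀ J ∈ F, MeasurableSet J) (hFd : (F : Set (Set A)).Pairwise Disjoint)
    (hcover : μ (⋃₀ ↑F)ᶜ = 0) : ∑ J ∈ F, μ.restrict J = μ :=
  finset_sum_restrict_eq_self μ (s := id) hFm hFd (by simpa [sUnion_eq_biUnion] using hcover)

lemma finset_sum_restrict_prod_univ_eq_self (hμ : π.map Prod.fst = μ) {F : Finset (Set A)}
    (hFm : ∀ J ∈ F, MeasurableSet J) (hFd : (F : Set (Set A)).Pairwise Disjoint)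
    (hcover : μ (⋃₀ ↑F)ᶜ = 0) : ∑ J ∈ F, π.restrict (J ×ˢ univ) = π := by
  refine finset_sum_restrict_eq_self π (fun J hJ => (hFm J hJ).prod .univ)
    (fun J hJ J' hJ' h => (hFd hJ hJ' h).set_prod_left univ univ) ?_
  have hU : (⋃ J ∈ F, J ×ˢ univ)ᶜ = (⋃₀ ↑F)ᶜ ×ˢ (univ : Set B) := by
    ext p
    simp
  rw [hU, measure_prod_univ_of_map_fst hμ (MeasurableSet.sUnion F.countable_toSet hFm).compl,
    hcover]

variable [IsFiniteMeasure π] (hμ : π.map Prod.fst = μ) {F : Finset (Set A)}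
  (hFm : ∀ J ∈ F, MeasurableSet J) (hFd : (F : Set (Set A)).Pairwise Disjoint)
  (hcover : μ (⋃₀ ↑F)ᶜ = 0)
include hμ hFm hFd hcover

lemma cellAverage_map_fst : (cellAverage μ F π).map Prod.fst = μ := by
  rw [cellAverage, Measure.map_finset_sum measurable_fst.aemeasurable,
    Finset.sum_congr rfl fun J hJ => cellProd_map_fst hμ (hFm J hJ),
    finset_sum_restrict_eq_self_of_sUnion μ hFm hFd hcover]

lemma cellAverage_map_snd : (cellAverage μ F π).map Prod.snd = π.map Prod.snd := by
  rw [cellAverage, Measure.map_finset_sum measurable_snd.aemeasurable,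
    Finset.sum_congr rfl fun J hJ => cellProd_map_snd hμ (hFm J hJ),
    ← Measure.map_finset_sum measurable_snd.aemeasurable,
    finset_sum_restrict_prod_univ_eq_self hμ hFm hFd hcover]

lemma OTC_cellAverage_le (c : A × B → A × B → ℝ≥0∞) {C : ℝ≥0∞}
    (hc : ∀ J ∈ F, ∀ a ∈ J, ∀ a' ∈ J, ∀ b, c (a, b) (a', b) ≤ C) :
    OTC c (cellAverage μ F π) π ≤ C * μ univ := by
  have : IsFiniteMeasure μ := hμ ▸ inferInstance
  have hfst : (∑ J ∈ F, cellCoupling μ π J).map Prod.fst = cellAverage μ F π := by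
    rw [Measure.map_finset_sum measurable_fst.aemeasurable, cellAverage]
    exact Finset.sum_congr rfl fun J _ => cellCoupling_map_fst J
  have hsnd : (∑ J ∈ F, cellCoupling μ π J).map Prod.snd = π := by
    rw [Measure.map_finset_sum measurable_snd.aemeasurable,
      Finset.sum_congr rfl fun J hJ => cellCoupling_map_snd hμ (hFm J hJ),
      finset_sum_restrict_prod_univ_eq_self hμ hFm hFd hcover]
  have hmass : ∑ J ∈ F, μ J = μ univ := by
    simpa using congrArg (· univ) (finset_sum_restrict_eq_self_of_sUnion μ hFm hFd hcover)
  calc OTC c (cellAverage μ F π) π ≤ ∫⁻ p, c p.1 p.2 ∂∑ J ∈ F, cellCoupling μ π J :=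
        OTC_le_lintegral c _ hfst hsnd
    _ = ∑ J ∈ F, ∫⁻ p, c p.1 p.2 ∂cellCoupling μ π J := lintegral_finsetSum_measure _ _ _
    _ ≤ ∑ J ∈ F, C * μ J := Finset.sum_le_sum fun J hJ =>
        lintegral_cellCoupling_le hμ (hFm J hJ) c (hc J hJ)
    _ = C * μ univ := by rw [← Finset.mul_sum, hmass]

end CellAverage

lemma avgF_eq_cellAverage (d : ℕ) (μ : Measure (E d)) (F : Finset (Set (E d)))
    (π : Measure (E d × E d)) : avgF d μ F π = cellAverage μ F π := by
  simp only [avgF, cellAverage, cellProd, prodM_eq_prod]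

theorem stmt19_general (d : ℕ) (Y : Set (E d))
    (π : Measure (E d × E d)) [IsProbabilityMeasure π]
    (μ : Measure (E d)) (hμ : π.map Prod.fst = μ)
    (hπs : π (Xcube d ×ˢ Y)ᶜ = 0)
    (F : Finset (Set (E d))) (hFm : ∀ J ∈ F, MeasurableSet J)
    (hFd : ∀ J ∈ F, ∀ J' ∈ F, J ≠ J' → Disjoint J J')
    (hFc : ⋃₀ ↑F = Xcube d)
    (δ : ℝ) (hdiam : ∀ J ∈ F, Metric.diam J ≤ δ) :
    IsProbabilityMeasure (avgF d μ F π) ∧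
    (avgF d μ F π).map Prod.fst = π.map Prod.fst ∧
    (avgF d μ F π).map Prod.snd = π.map Prod.snd ∧
    OTC edistE2 (avgF d μ F π) π ≤ ENNReal.ofReal δ := by
  have : IsProbabilityMeasure μ := hμ ▸ Measure.isProbabilityMeasure_map measurable_fst.aemeasurable
  have hcover : μ (⋃₀ ↑F)ᶜ = 0 := by
    rw [← hμ, Measure.map_apply measurable_fst (MeasurableSet.sUnion F.countable_toSet hFm).compl,
      hFc]
    exact measure_mono_null (fun p (hp : p.1 ∉ Xcube d) (hmem : p ∈ Xcube d ×ˢ Y) => hp hmem.1) hπs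
  have hcell : ∀ J ∈ F, ∀ a ∈ J, ∀ a' ∈ J, ∀ b : E d,
      edistE2 (a, b) (a', b) ≤ ENNReal.ofReal δ := fun J hJ a ha a' ha' b => by
    have hb : Bornology.IsBounded J := (isBounded_Xcube d).subset (hFc ▸ subset_sUnion_of_mem hJ)
    rw [edistE2_mk_mk_snd, edist_dist]
    exact ENNReal.ofReal_le_ofReal ((Metric.dist_le_diam_of_mem hb ha ha').trans (hdiam J hJ))
  have hfst := cellAverage_map_fst hμ hFm hFd hcover
  rw [avgF_eq_cellAverage]
  refine ⟨?_, hfst.trans hμ.symm, cellAverage_map_snd hμ hFm hFd hcover, ?_⟩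
  · have : IsProbabilityMeasure ((cellAverage μ F π).map Prod.fst) := by rw [hfst]; infer_instance
    exact Measure.isProbabilityMeasure_of_map Prod.fst
  · calc OTC edistE2 (cellAverage μ F π) π ≤ ENNReal.ofReal δ * μ univ :=
          OTC_cellAverage_le hμ hFm hFd hcover edistE2 hcell
      _ = ENNReal.ofReal δ := by rw [measure_univ, mul_one]

/-- averaging a coupling over a partition of `X` into cells of diameter at
most `δ` preserves both marginals and moves it by at most `δ` in the Wasserstein-1
distance on `X×Y` (Euclidean distance on `ℝ^{2d}`). -/
theorem stmt19 (d : ℕ) (Y : Set (E d)) (hY : IsCompact Y)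
    (π : Measure (E d × E d)) [IsProbabilityMeasure π]
    (μ : Measure (E d)) (hμ : π.map Prod.fst = μ)
    (hπs : π (Xcube d ×ˢ Y)ᶜ = 0)
    (F : Finset (Set (E d))) (hFm : ∀ J ∈ F, MeasurableSet J)
    (hFd : ∀ J ∈ F, ∀ J' ∈ F, J ≠ J' → Disjoint J J')
    (hFc : ⋃₀ ↑F = Xcube d)
    (δ : ℝ) (hδ : 0 ≤ δ) (hdiam : ∀ J ∈ F, Metric.diam J ≤ δ) :
    IsProbabilityMeasure (avgF d μ F π) ∧
    (avgF d μ F π).map Prod.fst = π.map Prod.fst ∧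
    (avgF d μ F π).map Prod.snd = π.map Prod.snd ∧
    OTC edistE2 (avgF d μ F π) π ≤ ENNReal.ofReal δ :=
  stmt19_general d Y π μ hμ hπs F hFm hFd hFc δ hdiam
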